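/- Let H : ℝ → ℝ be the Heaviside function with H(y) = 1 for y > 0 and H(y) = 0 for y ≤ 0. Define x₁ : [0, 2π] → ℝ by x₁(τ) = ((1/2)cos τ + (−π/4 + τ/2)·sin τ)·H(τ − π/2) + (−(1/2)cos τ + (3π/4 − τ/2)·sin τ)·H(τ − 3π/2) − (τ/4)·sin τ. Then x₁(0) = 0, x₁'(0) = 0, x₁ is continuously differentiable on [0, 2π], and for every τ ∈ (0, 2π) with τ ∉ {π/2, 3π/2}, x₁ is twice differentiable at τ with x₁''(τ) + x₁(τ) = −cos τ·(1 − H(τ − π/2) + H(τ − 3π/2)) + (1/2)·cos τ. -/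

import Mathlib

open Real

/-- Heaviside function: `H y = 1` for `y > 0`, `H y = 0` for `y ≤ 0`. -/
noncomputable def H (y : ℝ) : ℝ := if 0 < y then 1 else 0

/-- First-order Lindstedt–Poincaré correction for `ẍ + (1 + εH(x))x = 0`. -/
noncomputable def x₁ (τ : ℝ) : ℝ :=
  ((1 / 2) * Real.cos τ + (-(π / 4) + τ / 2) * Real.sin τ) * H (τ - π / 2)
    + (-(1 / 2) * Real.cos τ + (3 * π / 4 - τ / 2) * Real.sin τ) * H (τ - 3 * π / 2)
    - (τ / 4) * Real.sin τ

noncomputable def Af (t : ℝ) : ℝ := (1 / 2) * Real.cos t + (-(π / 4) + t / 2) * Real.sin t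
noncomputable def Af' (t : ℝ) : ℝ := (-(π / 4) + t / 2) * Real.cos t
noncomputable def Bf (t : ℝ) : ℝ := -(1 / 2) * Real.cos t + (3 * π / 4 - t / 2) * Real.sin t
noncomputable def Bf' (t : ℝ) : ℝ := (3 * π / 4 - t / 2) * Real.cos t
noncomputable def gf (t : ℝ) : ℝ := (t / 4) * Real.sin t
noncomputable def gf' (t : ℝ) : ℝ := (1 / 4) * Real.sin t + (t / 4) * Real.cos t
noncomputable def df (t : ℝ) : ℝ :=
  Af' t * H (t - π / 2) + Bf' t * H (t - 3 * π / 2) - gf' t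

lemma x₁_eq : x₁ = fun t => Af t * H (t - π / 2) + Bf t * H (t - 3 * π / 2) - gf t := rfl

lemma hAf (t : ℝ) : HasDerivAt Af (Af' t) t := by
  have h := ((Real.hasDerivAt_cos t).const_mul ((1:ℝ)/2)).add
    ((((hasDerivAt_id' t).div_const 2).const_add (-(π/4))).mul (Real.hasDerivAt_sin t))
  convert h using 1
  all_goals try rfl
  unfold Af'
  ring

lemma hAf' (t : ℝ) : HasDerivAt Af' ((1/2) * Real.cos t - (-(π / 4) + t / 2) * Real.sin t) t := by
  have h := (((hasDerivAt_id' t).div_const 2).const_add (-(π/4))).mul (Real.hasDerivAt_cos t)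
  convert h using 1
  all_goals try rfl
  ring

lemma hBf (t : ℝ) : HasDerivAt Bf (Bf' t) t := by
  have h := ((Real.hasDerivAt_cos t).const_mul (-(1:ℝ)/2)).add
    ((((hasDerivAt_id' t).div_const 2).const_sub (3*π/4)).mul (Real.hasDerivAt_sin t))
  convert h using 1
  all_goals try rfl
  · funext s; unfold Bf; simp only [Pi.add_apply, Pi.mul_apply]; ring
  · unfold Bf'; ring

lemma hBf' (t : ℝ) : HasDerivAt Bf' (-(1/2) * Real.cos t - (3 * π / 4 - t / 2) * Real.sin t) t := by
  have h := (((hasDerivAt_id' t).div_const 2).const_sub (3*π/4)).mul (Real.hasDerivAt_cos t)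
  convert h using 1
  all_goals try rfl
  ring

lemma hgf (t : ℝ) : HasDerivAt gf (gf' t) t := by
  have h := ((hasDerivAt_id' t).div_const 4).mul (Real.hasDerivAt_sin t)
  exact h

lemma hgf' (t : ℝ) : HasDerivAt gf' ((1/4) * Real.cos t + ((1/4) * Real.cos t - (t/4) * Real.sin t)) t := by
  have h := ((Real.hasDerivAt_sin t).const_mul ((1:ℝ)/4)).add
    (((hasDerivAt_id' t).div_const 4).mul (Real.hasDerivAt_cos t))
  convert h using 1
  all_goals try rfl
  ring

lemma H_of_pos {y : ℝ} (h : 0 < y) : H y = 1 := if_pos h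
lemma H_of_nonpos {y : ℝ} (h : y ≤ 0) : H y = 0 := if_neg (not_lt.mpr h)

lemma H_norm_le (y : ℝ) : ‖H y‖ ≤ 1 := by
  unfold H; split <;> simp

/-- locally constant version of H away from the jump -/
lemma H_eventually {c τ : ℝ} (h : τ ≠ c) : ∀ᶠ t in nhds τ, H (t - c) = H (τ - c) := by
  rcases lt_or_gt_of_ne h with hlt | hgt
  · filter_upwards [Iio_mem_nhds hlt] with t ht
    rw [H_of_nonpos (by linarith [Set.mem_Iio.mp ht]), H_of_nonpos (by linarith)]
  · filter_upwards [Ioi_mem_nhds hgt] with t ht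
    rw [H_of_pos (by simp at ht; linarith), H_of_pos (by linarith)]

/-- the jump lemma: if A vanishes to first order at c, then A·H(·-c) has derivative 0 at c. -/
lemma jump {A : ℝ → ℝ} {c : ℝ} (h0 : A c = 0) (h1 : HasDerivAt A 0 c) :
    HasDerivAt (fun t => A t * H (t - c)) 0 c := by
  rw [hasDerivAt_iff_isLittleO] at h1 ⊢
  simp only [h0, sub_zero, smul_zero, zero_sub, smul_eq_mul, mul_zero] at h1 ⊢
  have hc : H (c - c) = 0 := by rw [sub_self, H_of_nonpos le_rfl]
  simp only [hc, mul_zero, sub_zero]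
  have hO : (fun t => A t * H (t - c)) =O[nhds c] A := by
    apply Asymptotics.isBigO_of_le
    intro t
    rw [norm_mul]
    exact mul_le_of_le_one_right (norm_nonneg _) (H_norm_le _)
  exact hO.trans_isLittleO h1

lemma Af_pi2 : Af (π / 2) = 0 := by
  unfold Af; rw [Real.cos_pi_div_two, Real.sin_pi_div_two]; ring
lemma Af'_pi2 : Af' (π / 2) = 0 := by unfold Af'; ring
lemma cos_3pi2 : Real.cos (3 * π / 2) = 0 := by
  rw [show (3 * π / 2 : ℝ) = π + π / 2 by ring, Real.cos_add]
  simp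
lemma Bf_3pi2 : Bf (3 * π / 2) = 0 := by unfold Bf; rw [cos_3pi2]; ring
lemma Bf'_3pi2 : Bf' (3 * π / 2) = 0 := by unfold Bf'; ring

lemma pi2_lt : (π / 2 : ℝ) < 3 * π / 2 := by linarith [Real.pi_pos]

/-- x₁ has derivative df everywhere. -/
lemma hx₁ (τ : ℝ) : HasDerivAt x₁ (df τ) τ := by
  rcases eq_or_ne τ (π / 2) with rfl | h1
  · -- junction at π/2
    have he : (fun t => Af t * H (t - π / 2) - gf t) =ᶠ[nhds (π/2)] x₁ := by
      filter_upwards [Iio_mem_nhds pi2_lt] with t ht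
      rw [x₁_eq]
      simp only [H_of_nonpos (by linarith [Set.mem_Iio.mp ht] : t - 3 * π / 2 ≤ 0), mul_zero]
      ring
    have hd : HasDerivAt (fun t => Af t * H (t - π / 2) - gf t) (0 - gf' (π/2)) (π/2) :=
      (jump Af_pi2 (Af'_pi2 ▸ hAf (π/2))).sub (hgf _)
    have := hd.congr_of_eventuallyEq he.symm
    convert this using 1
    all_goals try rfl
    simp [df, Af'_pi2, H_of_nonpos (by linarith [Real.pi_pos] : (π/2 : ℝ) - 3 * π / 2 ≤ 0)]
  · rcases eq_or_ne τ (3 * π / 2) with rfl | h2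
    · -- junction at 3π/2
      have he : (fun t => Af t + Bf t * H (t - 3 * π / 2) - gf t) =ᶠ[nhds (3*π/2)] x₁ := by
        filter_upwards [Ioi_mem_nhds pi2_lt] with t ht
        rw [x₁_eq]
        simp only [H_of_pos (by simp at ht; linarith : (0:ℝ) < t - π / 2), mul_one]
      have hd : HasDerivAt (fun t => Af t + Bf t * H (t - 3 * π / 2) - gf t)
          (Af' (3*π/2) + 0 - gf' (3*π/2)) (3*π/2) :=
        ((hAf _).add (jump Bf_3pi2 (Bf'_3pi2 ▸ hBf (3*π/2)))).sub (hgf _)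
      have := hd.congr_of_eventuallyEq he.symm
      convert this using 1
      all_goals try rfl
      have : H ((3*π/2 : ℝ) - π/2) = 1 := H_of_pos (by linarith [Real.pi_pos])
      simp [df, this, Bf'_3pi2, H_of_nonpos (le_of_eq (by ring) : (3*π/2 : ℝ) - 3*π/2 ≤ 0)]
    · -- away from junctions
      have he : (fun t => Af t * H (τ - π / 2) + Bf t * H (τ - 3 * π / 2) - gf t)
          =ᶠ[nhds τ] x₁ := by
        filter_upwards [H_eventually h1, H_eventually h2] with t e1 e2
        simp only [x₁_eq, e1, e2]
      have hd : HasDerivAt (fun t => Af t * H (τ - π / 2) + Bf t * H (τ - 3 * π / 2) - gf t)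
          (Af' τ * H (τ - π / 2) + Bf' τ * H (τ - 3 * π / 2) - gf' τ) τ :=
        (((hAf τ).mul_const _).add ((hBf τ).mul_const _)).sub (hgf τ)
      exact hd.congr_of_eventuallyEq he.symm

lemma deriv_x₁ : deriv x₁ = df := funext fun τ => (hx₁ τ).deriv

/-- continuity of φ·H(·-c) when φ(c) = 0. -/
lemma cont_mul_H {φ : ℝ → ℝ} {c : ℝ} (hφ : Continuous φ) (h0 : φ c = 0) :
    Continuous fun t => φ t * H (t - c) := by
  rw [continuous_iff_continuousAt]
  intro τ
  rcases eq_or_ne τ c with rfl | h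
  · have : Filter.Tendsto (fun t => φ t * H (t - τ)) (nhds τ) (nhds 0) := by
      refine squeeze_zero_norm (a := fun t => ‖φ t‖) (fun t => ?_) ?_
      · rw [norm_mul]; exact mul_le_of_le_one_right (norm_nonneg _) (H_norm_le _)
      · have := (hφ.norm.tendsto τ); rwa [h0, norm_zero] at this
    unfold ContinuousAt
    convert this using 2
    simp [h0]
  · have he : (fun t => φ t * H (τ - c)) =ᶠ[nhds τ] fun t => φ t * H (t - c) := by
      filter_upwards [H_eventually h] with t e; rw [e]
    exact ((hφ.continuousAt).mul continuousAt_const).congr he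

lemma cont_Af' : Continuous Af' := by
  unfold Af'; fun_prop
lemma cont_Bf' : Continuous Bf' := by
  unfold Bf'; fun_prop
lemma cont_gf' : Continuous gf' := by
  unfold gf'; fun_prop

lemma cont_df : Continuous df := by
  unfold df
  apply Continuous.sub _ cont_gf'
  exact (cont_mul_H cont_Af' Af'_pi2).add (cont_mul_H cont_Bf' Bf'_3pi2)

theorem stmt_4 :
    x₁ 0 = 0 ∧ deriv x₁ 0 = 0 ∧ ContDiffOn ℝ 1 x₁ (Set.Icc (0 : ℝ) (2 * π)) ∧
    ∀ τ ∈ Set.Ioo (0 : ℝ) (2 * π), τ ≠ π / 2 → τ ≠ 3 * π / 2 →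
      DifferentiableAt ℝ x₁ τ ∧ DifferentiableAt ℝ (deriv x₁) τ ∧
      deriv (deriv x₁) τ + x₁ τ
        = -Real.cos τ * (1 - H (τ - π / 2) + H (τ - 3 * π / 2))
          + (1 / 2) * Real.cos τ := by
  have hpi := Real.pi_pos
  refine ⟨?_, ?_, ?_, ?_⟩
  · simp only [x₁_eq]
    rw [H_of_nonpos (show (0:ℝ) - π/2 ≤ 0 by linarith),
      H_of_nonpos (show (0:ℝ) - 3*π/2 ≤ 0 by linarith)]
    simp [gf]
  · rw [deriv_x₁]
    unfold df
    rw [H_of_nonpos (show (0:ℝ) - π/2 ≤ 0 by linarith),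
      H_of_nonpos (show (0:ℝ) - 3*π/2 ≤ 0 by linarith)]
    simp [gf']
  · have : ContDiff ℝ 1 x₁ := by
      rw [contDiff_one_iff_deriv]
      exact ⟨fun τ => (hx₁ τ).differentiableAt, by rw [deriv_x₁]; exact cont_df⟩
    exact this.contDiffOn
  · intro τ hτ h1 h2
    refine ⟨(hx₁ τ).differentiableAt, ?_, ?_⟩
    all_goals {
      have he : (fun t => (Af' t * H (τ - π / 2) + Bf' t * H (τ - 3 * π / 2)) - gf' t)
          =ᶠ[nhds τ] df := by
        filter_upwards [H_eventually h1, H_eventually h2] with t e1 e2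
        unfold df; rw [e1, e2]
      have hd : HasDerivAt df
          (((1/2) * Real.cos τ - (-(π / 4) + τ / 2) * Real.sin τ) * H (τ - π / 2)
            + (-(1/2) * Real.cos τ - (3 * π / 4 - τ / 2) * Real.sin τ) * H (τ - 3 * π / 2)
            - ((1/4) * Real.cos τ + ((1/4) * Real.cos τ - (τ/4) * Real.sin τ))) τ := by
        refine HasDerivAt.congr_of_eventuallyEq ?_ he.symm
        exact (((hAf' τ).mul_const _).add ((hBf' τ).mul_const _)).sub (hgf' τ)
      rw [deriv_x₁]
      first
      | exact hd.differentiableAt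
      | (rw [hd.deriv, x₁_eq]
         simp only [Af, Bf, gf]
         ring)
    }
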